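/- Let k > 1 and let Π be a valid refinement sequence for the layered bisplitter C_k, and let π be a partition occurring in Π. If two stake states [σ, ℓ] and [σ', ℓ] (for some level 1 ≤ ℓ ≤ 2^k) lie in different blocks of π, then for every level m with ℓ ≤ m ≤ 2^k the states [σ, m] and [σ', m] lie in different blocks of π. -/
import Mathlib


/-! ## Labeled transition systems with initial partition, partitions, refinement -/

structure LTS (S A : Type) where
  tr : S → A → S → Prop
  init : Finset (Finset S)

def inSameBlock {S : Type} (π : Finset (Finset S)) (s t : S) : Prop :=
  ∃ B ∈ π, s ∈ B ∧ t ∈ B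

def IsBlockPartition {S : Type} (π : Finset (Finset S)) : Prop :=
  ∅ ∉ π ∧ (∀ B ∈ π, ∀ B' ∈ π, B ≠ B' → Disjoint B B') ∧ ∀ s : S, ∃ B ∈ π, s ∈ B

def RefinesPart {S : Type} (π' π : Finset (Finset S)) : Prop :=
  ∀ B' ∈ π', ∃ B ∈ π, B' ⊆ B

def ReachesSet {S A : Type} (L : LTS S A) (s : S) (a : A) (U : Finset S) : Prop :=
  ∃ t ∈ U, L.tr s a t

def StableUnderBlock {S A : Type} (L : LTS S A) (V U : Finset S) : Prop :=
  ∀ a : A, (∀ s ∈ V, ReachesSet L s a U) ∨ (∀ s ∈ V, ¬ ReachesSet L s a U)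

def IsStablePartition {S A : Type} (L : LTS S A) (π : Finset (Finset S)) : Prop :=
  ∀ B ∈ π, ∀ C ∈ π, StableUnderBlock L B C

def SplitWitness {S A : Type} (L : LTS S A) (π : Finset (Finset S)) (s t : S) : Prop :=
  ∃ a s', L.tr s a s' ∧ ∀ t', L.tr t a t' → ¬ inSameBlock π s' t'

def ValidRefinement {S A : Type} (L : LTS S A) (π π' : Finset (Finset S)) : Prop :=
  RefinesPart π' π ∧ π' ≠ π ∧
  ∀ s t : S, ¬ inSameBlock π' s t →
    (¬ inSameBlock π s t ∨ SplitWitness L π s t ∨ SplitWitness L π t s)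

def ValidRefinementSeq {S A : Type} (L : LTS S A) (n : ℕ)
    (seq : ℕ → Finset (Finset S)) : Prop :=
  seq 0 = L.init ∧ (∀ i ≤ n, IsBlockPartition (seq i)) ∧
  (∀ i < n, ValidRefinement L (seq i) (seq (i + 1))) ∧
  IsStablePartition L (seq n)

/-! ## Refinement costs -/

def IRCstep {S : Type} [DecidableEq S] (π π' : Finset (Finset S)) : ℕ :=
  ∑ B ∈ π, (B.card - (π'.filter fun B' => B' ⊆ B).sup Finset.card)

def IRCseq {S : Type} [DecidableEq S] (n : ℕ) (seq : ℕ → Finset (Finset S)) : ℕ :=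
  ∑ i ∈ Finset.range n, IRCstep (seq i) (seq (i + 1))

noncomputable def IRC {S A : Type} [DecidableEq S] (L : LTS S A) : ℕ :=
  sInf {c | ∃ n seq, ValidRefinementSeq L n seq ∧ IRCseq n seq = c}

noncomputable def PIRC {S A : Type} (L : LTS S A) : ℕ :=
  sInf {n | ∃ seq, ValidRefinementSeq L n seq}

/-! ## Bisimulation, end structures, paths -/

def IsBisimulation {S A : Type} (L : LTS S A) (R : S → S → Prop) : Prop :=
  Symmetric R ∧ (∀ s t, R s t → inSameBlock L.init s t) ∧
  ∀ s t a s', R s t → L.tr s a s' → ∃ t', L.tr t a t' ∧ R s' t'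

def Bisimilar {S A : Type} (L : LTS S A) (s t : S) : Prop :=
  ∃ R, IsBisimulation L R ∧ R s t

def TransClosed {S A : Type} (L : LTS S A) (U : Set S) : Prop :=
  ∀ s ∈ U, ∀ a t, L.tr s a t → t ∈ U

def EndStructure {S A : Type} (L : LTS S A) (U : Set S) : Prop :=
  U.Nonempty ∧ TransClosed L U ∧
  ∀ V : Set S, TransClosed L V → (U ∩ V).Nonempty → U ⊆ V

def PathTo {S A : Type} (L : LTS S A) : List A → S → S → Prop
  | [], s, t => s = t
  | a :: w, s, t => ∃ u, L.tr s a u ∧ PathTo L w u t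

/-! ## The bisplitter B_k -/

def bsStep {k : ℕ} (σ : Fin k → Bool) (j : Fin (k - 1)) : Fin k → Bool :=
  if σ ⟨j.val + 1, by have := j.isLt; omega⟩ = false then σ
  else fun p => if p.val < j.val then σ p else if p.val = j.val then !(σ p) else false

def prefixBlock (k : ℕ) (p : List Bool) : Finset (Fin k → Bool) :=
  Finset.univ.filter fun σ => p <+: List.ofFn σ

def bisplitter (k : ℕ) : LTS (Fin k → Bool) (Fin (k - 1)) where
  tr := fun s a t => t = bsStep s a
  init := {prefixBlock k [false], prefixBlock k [true]}

def zeroState (k : ℕ) : Fin k → Bool := fun _ => false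

def oneState (k : ℕ) : Fin k → Bool := fun i => decide (i.val = 0)

/-- The bisplitter with the initial partition updated by the end structure oracle. -/
def bisplitter' (k : ℕ) : LTS (Fin k → Bool) (Fin (k - 1)) where
  tr := (bisplitter k).tr
  init := { {zeroState k}, prefixBlock k [false] \ {zeroState k},
            {oneState k}, prefixBlock k [true] \ {oneState k} }

/-! ## The layered bisplitter C_k -/

def treeHeight (k : ℕ) : ℕ := Nat.clog 2 (k / 2)

abbrev TreeWord (h : ℕ) := Σ i : Fin (h + 1), Fin i.val → Bool

abbrev CState (k : ℕ) :=
  ((Fin k → Bool) × Fin (2 ^ k)) ⊕ ((Fin k → Bool) × TreeWord (treeHeight k))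

instance instCStateDecEq (k : ℕ) : DecidableEq (CState k) := inferInstance

instance instCStateFintype (k : ℕ) : Fintype (CState k) := inferInstance

def rootWord (k : ℕ) : TreeWord (treeHeight k) := ⟨⟨0, Nat.succ_pos _⟩, Fin.elim0⟩

def binVal (w : List Bool) : ℕ := w.foldl (fun acc b => 2 * acc + b.toNat) 0

/-- The a_j-successor in B_k for j = lbl(v) = min(bin(v)+1, k-1) (1-based),
    i.e. 0-based index min(bin(v), k-2). -/
def bkSucc (k : ℕ) (σ : Fin k → Bool) (v : List Bool) : Fin k → Bool :=
  if h : min (binVal v) (k - 2) < k - 1 then bsStep σ ⟨min (binVal v) (k - 2), h⟩ else σ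

def cTr (k : ℕ) (s : CState k) (α : Bool) (t : CState k) : Prop :=
  match s with
  | Sum.inl (σ, ℓ) =>
      if h : ℓ.val + 1 < 2 ^ k then t = Sum.inl (σ, ⟨ℓ.val + 1, h⟩)
      else t = Sum.inr (σ, rootWord k)
  | Sum.inr (σ, w) =>
      if h : w.1.val < treeHeight k then
        t = Sum.inr (σ, ⟨⟨w.1.val + 1, by omega⟩, Fin.snoc w.2 α⟩)
      else t = Sum.inl (bkSucc k σ (List.ofFn w.2 ++ [α]), ⟨0, by positivity⟩)

def firstBit {k : ℕ} (σ : Fin k → Bool) : Bool :=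
  if h : 0 < k then σ ⟨0, h⟩ else false

def stakeBlock (k : ℕ) (ℓ : Fin (2 ^ k)) (b : Bool) : Finset (CState k) :=
  Finset.univ.filter fun s => ∃ σ : Fin k → Bool, firstBit σ = b ∧ s = Sum.inl (σ, ℓ)

def treeBlock (k : ℕ) : Finset (CState k) :=
  Finset.univ.filter fun s => s.isRight = true

def cInit (k : ℕ) : Finset (Finset (CState k)) :=
  (Finset.univ.image fun p : Fin (2 ^ k) × Bool => stakeBlock k p.1 p.2) ∪ {treeBlock k}

def layered (k : ℕ) : LTS (CState k) Bool := ⟨cTr k, cInit k⟩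

/-- The stake index of level 1. -/
def firstLevel (k : ℕ) : Fin (2 ^ k) := ⟨0, by positivity⟩

/-- The stake index of level 2^k. -/
def lastLevel (k : ℕ) : Fin (2 ^ k) :=
  ⟨2 ^ k - 1, Nat.sub_lt (by positivity) one_pos⟩

def mkWord {h : ℕ} (w : List Bool) (hw : w.length ≤ h) : TreeWord h :=
  ⟨⟨w.length, Nat.lt_succ_of_le hw⟩, fun j => w.get j⟩

def endSet (k : ℕ) (σ₀ : Fin k → Bool) : Set (CState k) :=
  {s | (∃ ℓ, s = Sum.inl (σ₀, ℓ)) ∨ ∃ w, s = Sum.inr (σ₀, w)}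

/-! ## End structure partition -/

noncomputable def bisimClass {S A : Type} [Fintype S] (L : LTS S A) (s : S) : Finset S :=
  (Set.toFinite {t | Bisimilar L s t}).toFinset

def ESUnion {S A : Type} (L : LTS S A) : Set S := ⋃₀ {U | EndStructure L U}

noncomputable def esPartition {S A : Type} [Fintype S] [DecidableEq S] (L : LTS S A) :
    Finset (Finset S) :=
  ((Set.toFinite {B : Finset S | ∃ s ∈ ESUnion L, B = bisimClass L s}).toFinset ∪
      L.init.image fun B =>
        B \ (Set.toFinite {t | ∃ s ∈ ESUnion L, Bisimilar L s t}).toFinset) \ {∅}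

/-! ## The sequential splitter D_n (states 0,…,n-1 standing for 1,…,n) -/

def seqSplitter (n : ℕ) : LTS (Fin n) Unit where
  tr := fun s _ t => if h : s.val + 1 < n then t = ⟨s.val + 1, h⟩ else t = s
  init := {Finset.univ.filter fun s => s.val + 1 < n,
           Finset.univ.filter fun s => s.val + 1 = n}

def dPart (n i : ℕ) : Finset (Finset (Fin n)) :=
  {Finset.univ.filter fun s => s.val + i < n} ∪
    (Finset.univ.filter fun s : Fin n => n ≤ s.val + i).image fun s => {s}

/-! ## The fast parallel example G_k -/

def gLTS (k : ℕ) : LTS (Fin (2 ^ k) ⊕ Fin k) Unit where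
  tr := fun s _ t => ∃ (i : Fin (2 ^ k)) (j : Fin k),
    s = Sum.inl i ∧ t = Sum.inr j ∧ Nat.testBit i.val j.val = true
  init := {Finset.univ.filter fun s => s.isLeft = true} ∪
    Finset.univ.image fun j : Fin k => ({Sum.inr j} : Finset (Fin (2 ^ k) ⊕ Fin k))
lemma inSameBlock_symm {S : Type} {π : Finset (Finset S)} {s t : S}
    (h : inSameBlock π s t) : inSameBlock π t s := by
  obtain ⟨B, hB, hs, ht⟩ := h; exact ⟨B, hB, ht, hs⟩

lemma persist {S : Type} {π π' : Finset (Finset S)} (href : RefinesPart π' π)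
    {s t : S} (h : ¬ inSameBlock π s t) : ¬ inSameBlock π' s t := by
  rintro ⟨B', hB', hs, ht⟩
  obtain ⟨B, hB, hsub⟩ := href B' hB'
  exact h ⟨B, hB, hsub hs, hsub ht⟩

lemma stake_mem (k : ℕ) (σ : Fin k → Bool) (ℓ : Fin (2 ^ k)) :
    (Sum.inl (σ, ℓ) : CState k) ∈ stakeBlock k ℓ (firstBit σ) := by
  simp [stakeBlock]

lemma stake_mem_iff (k : ℕ) (σ : Fin k → Bool) (ℓ ℓ' : Fin (2 ^ k)) (b : Bool) :
    (Sum.inl (σ, ℓ) : CState k) ∈ stakeBlock k ℓ' b ↔ ℓ = ℓ' ∧ firstBit σ = b := by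
  simp only [stakeBlock, Finset.mem_filter, Finset.mem_univ, true_and]
  constructor
  · rintro ⟨τ, hτ, h⟩
    obtain ⟨h1, h2⟩ := Prod.mk.injEq .. ▸ Sum.inl.inj h
    subst h1; subst h2; exact ⟨rfl, hτ⟩
  · rintro ⟨rfl, rfl⟩; exact ⟨σ, rfl, rfl⟩

lemma stake_sep_aux (k : ℕ) (hk : 1 < k) (n : ℕ) (seq : ℕ → Finset (Finset (CState k)))
    (hseq : ValidRefinementSeq (layered k) n seq) :
    ∀ i ≤ n, ∀ (σ σ' : Fin k → Bool) (ℓ m : Fin (2 ^ k)), ℓ ≤ m →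
      ¬ inSameBlock (seq i) (Sum.inl (σ, ℓ)) (Sum.inl (σ', ℓ)) →
      ¬ inSameBlock (seq i) (Sum.inl (σ, m)) (Sum.inl (σ', m)) := by
  obtain ⟨h0, _hpart, hvr, _⟩ := hseq
  intro i
  induction i with
  | zero =>
    intro _ σ σ' ℓ m _ hdiff
    rw [h0] at hdiff ⊢
    have hfb : firstBit σ ≠ firstBit σ' := by
      intro hfb
      exact hdiff ⟨stakeBlock k ℓ (firstBit σ), by
        simp only [layered, cInit, Finset.mem_union, Finset.mem_image]
        exact Or.inl ⟨⟨ℓ, firstBit σ⟩, Finset.mem_univ _, rfl⟩,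
        stake_mem k σ ℓ, hfb ▸ stake_mem k σ' ℓ⟩
    rintro ⟨B, hB, hs, ht⟩
    simp only [layered, cInit, Finset.mem_union, Finset.mem_image, Finset.mem_singleton] at hB
    rcases hB with ⟨⟨ℓ', b⟩, -, rfl⟩ | rfl
    · rw [stake_mem_iff] at hs ht
      exact hfb (hs.2.trans ht.2.symm)
    · simp [treeBlock] at hs
  | succ i ih =>
    intro hi σ σ' ℓ m hlm hdiff
    have hi' : i ≤ n := by omega
    have hvri := hvr i (by omega)
    have href := hvri.1
    rcases eq_or_lt_of_le hlm with rfl | hlt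
    · exact hdiff
    have hℓ1 : ℓ.val + 1 < 2 ^ k := by
      have := m.isLt; have : ℓ.val < m.val := hlt; omega
    have hle1 : (⟨ℓ.val + 1, hℓ1⟩ : Fin (2 ^ k)) ≤ m := by
      have : ℓ.val < m.val := hlt
      exact Fin.mk_le_of_le_val (by omega)
    have key : ∀ τ τ' : Fin k → Bool,
        SplitWitness (layered k) (seq i) (Sum.inl (τ, ℓ)) (Sum.inl (τ', ℓ)) →
        ¬ inSameBlock (seq i) (Sum.inl (τ, ⟨ℓ.val + 1, hℓ1⟩))
          (Sum.inl (τ', ⟨ℓ.val + 1, hℓ1⟩)) := by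
      rintro τ τ' ⟨a, s', hs', hsep⟩
      have hs'eq : s' = Sum.inl (τ, ⟨ℓ.val + 1, hℓ1⟩) := by
        simpa [layered, cTr, hℓ1] using hs'
      have ht' : (layered k).tr (Sum.inl (τ', ℓ)) a (Sum.inl (τ', ⟨ℓ.val + 1, hℓ1⟩)) := by
        simp [layered, cTr, hℓ1]
      exact hs'eq ▸ hsep _ ht'
    rcases hvri.2.2 _ _ hdiff with h | h | h
    · exact persist href (ih hi' σ σ' ℓ m hlm h)
    · exact persist href (ih hi' σ σ' ⟨ℓ.val + 1, hℓ1⟩ m hle1 (key σ σ' h))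
    · exact fun hsame => persist href
        (ih hi' σ' σ ⟨ℓ.val + 1, hℓ1⟩ m hle1 (key σ' σ h)) (inSameBlock_symm hsame)

/-- In any partition occurring in a valid refinement sequence for the layered
bisplitter `C_k`, if two stake states at the same level are separated, then the
corresponding stake states at every lower level (larger level number) are separated too. -/
theorem stake_separation_propagates_downwards
    (k : ℕ) (hk : 1 < k) (n : ℕ) (seq : ℕ → Finset (Finset (CState k)))
    (hseq : ValidRefinementSeq (layered k) n seq) (i : ℕ) (hi : i ≤ n)
    (σ σ' : Fin k → Bool) (ℓ m : Fin (2 ^ k)) (hlm : ℓ ≤ m)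
    (hdiff : ¬ inSameBlock (seq i) (Sum.inl (σ, ℓ)) (Sum.inl (σ', ℓ))) :
    ¬ inSameBlock (seq i) (Sum.inl (σ, m)) (Sum.inl (σ', m)) := by
  exact stake_sep_aux k hk n seq hseq i hi σ σ' ℓ m hlm hdiff
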